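/- arXiv:1711.09650 — 3 statements merged into one kernel-verified Lean document; each statement's English description precedes it below -/
import Mathlib

section
/- Let λ ≥ 0. Then the subspace W^r_λ = {v' + λv : v ∈ P^r_0} of P^r has dimension r, and P^r is the direct sum of W^r_λ and the span of L(1), i.e. W^r_λ ∩ span{L(1)} = {0} and W^r_λ + span{L(1)} = P^r. -/
open Polynomial MeasureTheory intervalIntegral

/-- The rescaled Legendre polynomials on `[t₀, t₁]`: `K i` has degree `i`,
`K i (t₁) = 1`, `K i (t₀) = (-1)^i`, and they are `L²(t₀,t₁)`-orthogonal with
`∫ K i ^ 2 = (t₁ - t₀)/(2 i + 1)`. -/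
def IsLegendreBasis (t₀ t₁ : ℝ) (K : ℕ → Polynomial ℝ) : Prop :=
  (∀ i, (K i).natDegree = i) ∧ (∀ i, (K i).eval t₁ = 1) ∧
  (∀ i, (K i).eval t₀ = (-1 : ℝ) ^ i) ∧
  (∀ i j, (∫ t in t₀..t₁, (K i).eval t * (K j).eval t) =
    if i = j then (t₁ - t₀) / (2 * (i : ℝ) + 1) else 0)

/-- The lifting operator `L(z) = (z/k) ∑_{i=0}^r (-1)^i (2i+1) K_i`. -/
noncomputable def Lop (t₀ t₁ : ℝ) (r : ℕ) (K : ℕ → Polynomial ℝ) (z : ℝ) : Polynomial ℝ :=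
  Polynomial.C (z / (t₁ - t₀)) *
    ∑ i ∈ Finset.range (r + 1), Polynomial.C ((-1 : ℝ) ^ i * (2 * (i : ℝ) + 1)) * K i

/-- The endpoint lifting operator `L̂(z) = (z/k) ∑_{i=0}^r (2i+1) K_i`. -/
noncomputable def LopE (t₀ t₁ : ℝ) (r : ℕ) (K : ℕ → Polynomial ℝ) (z : ℝ) : Polynomial ℝ :=
  Polynomial.C (z / (t₁ - t₀)) *
    ∑ i ∈ Finset.range (r + 1), Polynomial.C (2 * (i : ℝ) + 1) * K i

/-- The scalar dG operator `Γ_λ(v) = v' + L(v(t₀)) + λ v`. -/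
noncomputable def Gam (t₀ t₁ : ℝ) (r : ℕ) (K : ℕ → Polynomial ℝ) (lam : ℝ)
    (v : Polynomial ℝ) : Polynomial ℝ :=
  Polynomial.derivative v + Lop t₀ t₁ r K (v.eval t₀) + Polynomial.C lam * v

/-- The subspace `W^r_λ = {v' + λ v : v ∈ P^r_0}` of `P^r`. -/
noncomputable def Wsub (t₀ : ℝ) (r : ℕ) (lam : ℝ) : Submodule ℝ (Polynomial ℝ) :=
  Submodule.map (Polynomial.derivative + lam • (LinearMap.id : Polynomial ℝ →ₗ[ℝ] Polynomial ℝ))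
    (Polynomial.degreeLE ℝ r ⊓ LinearMap.ker (Polynomial.leval t₀))

/-!
The map `v ↦ v' + λ v` is injective on `P^r_0`, so `dim W^r_λ = dim P^r_0 = r`. If
`v' + λ v = c L(1)` with `v ∈ P^r_0`, testing against `v` with the lifting identity gives
`v(t₁)² / 2 + λ ∫ v² = c v(t₀) = 0`, so for `λ ≥ 0` both `v(t₁)` and `λ ∫ v²` vanish; testing
against `1` gives `c = v(t₁) + λ ∫ v`, which is then `0` (either `λ = 0` or `v = 0`).
Since `∫ L(1) = 1`, `L(1) ≠ 0`, and counting dimensions gives `P^r = W^r_λ ⊕ span {L(1)}`.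
-/

namespace Polynomial

instance (R : Type*) [Semiring R] (n : ℕ) : Module.Finite R (degreeLE R n) :=
  degreeLT_succ_eq_degreeLE (R := R) (n := n) ▸ inferInstance

theorem finrank_degreeLE (F : Type*) [Field F] (n : ℕ) :
    Module.finrank F (degreeLE F n) = n + 1 := by
  rw [← degreeLT_succ_eq_degreeLE, Module.finrank_eq_card_basis (degreeLT.basis F (n + 1)),
    Fintype.card_fin]

theorem C_mem_degreeLE {R : Type*} [Semiring R] (a : R) (n : ℕ) : C a ∈ degreeLE R n :=
  mem_degreeLE.2 (degree_C_le.trans (WithBot.coe_le_coe.2 n.zero_le))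

theorem finrank_degreeLE_inf_ker_leval {F : Type*} [Field F] (n : ℕ) (a : F) :
    Module.finrank F ↥(degreeLE F n ⊓ LinearMap.ker (leval a)) = n := by
  have hg : LinearMap.range ((leval a).domRestrict (degreeLE F n)) = ⊤ :=
    LinearMap.range_eq_top.2 fun x => ⟨⟨C x, C_mem_degreeLE x n⟩, by simp⟩
  have hrank := LinearMap.finrank_range_add_finrank_ker ((leval a).domRestrict (degreeLE F n))
  rw [hg, finrank_top, Module.finrank_self, finrank_degreeLE] at hrank
  rw [← Submodule.map_comap_subtype, Submodule.finrank_map_subtype_eq, ← LinearMap.ker_domRestrict]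
  omega

theorem eq_zero_of_derivative_add_smul_eq_zero {F : Type*} [Field F] [CharZero F] {p : F[X]}
    {a c : F} (hp : p.eval a = 0) (h : derivative p + c • p = 0) : p = 0 := by
  rcases eq_or_ne p.natDegree 0 with h0 | h0
  · rw [eq_C_of_natDegree_eq_zero h0] at hp ⊢
    rw [eval_C] at hp
    rw [hp, map_zero]
  · rcases eq_or_ne c 0 with rfl | hc
    · rw [zero_smul, add_zero, derivative_eq_zero] at h
      exact absurd h h0
    · have hlt := natDegree_derivative_lt h0
      rw [eq_neg_of_add_eq_zero_left h, natDegree_neg, natDegree_smul _ hc] at hlt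
      exact absurd hlt (lt_irrefl _)

theorem intervalIntegrable_eval_mul_eval (p q : ℝ[X]) (a b : ℝ) :
    IntervalIntegrable (fun t => p.eval t * q.eval t) volume a b :=
  (p.continuous.mul q.continuous).intervalIntegrable a b

theorem integral_derivative_mul_self (p : ℝ[X]) (a b : ℝ) :
    ∫ t in a..b, (derivative p).eval t * p.eval t = (p.eval b ^ 2 - p.eval a ^ 2) / 2 := by
  have hp : ∀ x ∈ Set.uIcc a b, HasDerivAt (fun t => p.eval t) ((derivative p).eval x) x :=
    fun x _ => p.hasDerivAt x
  have hp' := (derivative p).continuous.intervalIntegrable (μ := volume) a b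
  have hparts := integral_deriv_mul_eq_sub hp hp hp' hp'
  rw [integral_congr (g := fun t => 2 * ((derivative p).eval t * p.eval t)) (fun t _ => by ring),
    intervalIntegral.integral_const_mul] at hparts
  linarith

theorem eq_zero_of_integral_mul_self_eq_zero {p : ℝ[X]} {a b : ℝ} (hab : a < b)
    (h : ∫ t in a..b, p.eval t * p.eval t = 0) : p = 0 := by
  by_contra hp
  obtain ⟨c, hc, hroot⟩ := ((Set.Icc_infinite hab).sdiff (finite_setOfPred_isRoot hp)).nonempty
  have hpos := integral_pos (f := fun t => p.eval t * p.eval t) hab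
    (p.continuous.mul p.continuous).continuousOn (fun x _ => mul_self_nonneg _)
    ⟨c, hc, mul_self_pos.2 hroot⟩
  linarith

end Polynomial

section

variable {t₀ t₁ : ℝ} {r : ℕ} {K : ℕ → ℝ[X]} {lam : ℝ}

theorem IsLegendreBasis.ne_zero (hK : IsLegendreBasis t₀ t₁ K) (i : ℕ) : K i ≠ 0 :=
  fun h => by simpa [h] using hK.2.1 i

theorem IsLegendreBasis.degree_eq (hK : IsLegendreBasis t₀ t₁ K) (i : ℕ) : (K i).degree = i := by
  rw [degree_eq_natDegree (hK.ne_zero i), hK.1 i]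

theorem IsLegendreBasis.span_image_Iic (hK : IsLegendreBasis t₀ t₁ K) (n : ℕ) :
    Submodule.span ℝ (K '' Set.Iic n) = degreeLE ℝ n :=
  Sequence.span_degreeLE ⟨K, hK.degree_eq⟩ fun i _ =>
    isUnit_iff_ne_zero.2 (leadingCoeff_ne_zero.2 (hK.ne_zero i))

theorem Lop_mem_degreeLE (hK : IsLegendreBasis t₀ t₁ K) (z : ℝ) :
    Lop t₀ t₁ r K z ∈ degreeLE ℝ r := by
  rw [← hK.span_image_Iic, Lop, C_mul']
  refine Submodule.smul_mem _ _ (Submodule.sum_mem _ fun i hi => ?_)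
  rw [C_mul']
  exact Submodule.smul_mem _ _
    (Submodule.subset_span ⟨i, Nat.lt_succ_iff.1 (Finset.mem_range.1 hi), rfl⟩)

theorem IsLegendreBasis.integral_Lop_mul (ht : t₀ ≠ t₁) (hK : IsLegendreBasis t₀ t₁ K) (z : ℝ)
    {V : ℝ[X]} (hV : V ∈ degreeLE ℝ r) :
    ∫ t in t₀..t₁, (Lop t₀ t₁ r K z).eval t * V.eval t = z * V.eval t₀ := by
  rw [← hK.span_image_Iic] at hV
  induction hV using Submodule.span_induction with
  | mem _ hV =>
    obtain ⟨j, hj, rfl⟩ := hV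
    have hk : t₁ - t₀ ≠ 0 := sub_ne_zero.2 ht.symm
    calc ∫ t in t₀..t₁, (Lop t₀ t₁ r K z).eval t * (K j).eval t
        = ∑ i ∈ Finset.range (r + 1), z / (t₁ - t₀) * ((-1) ^ i * (2 * i + 1)) *
            ∫ t in t₀..t₁, (K i).eval t * (K j).eval t := by
          simp only [Lop, eval_mul, eval_C, eval_finsetSum, Finset.mul_sum, Finset.sum_mul,
            mul_assoc]
          rw [intervalIntegral.integral_finsetSum fun i _ =>
            (((intervalIntegrable_eval_mul_eval _ _ _ _).const_mul _).const_mul _).const_mul _]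
          simp only [intervalIntegral.integral_const_mul]
      _ = z / (t₁ - t₀) * ((-1) ^ j * (2 * j + 1)) * ((t₁ - t₀) / (2 * j + 1)) := by
          simp only [hK.2.2.2, mul_ite, mul_zero]
          rw [Finset.sum_ite_eq', if_pos (Finset.mem_range_succ_iff.2 hj)]
      _ = z * (K j).eval t₀ := by
          rw [hK.2.2.1]
          field_simp
  | zero => simp
  | add V W _ _ hV hW =>
    simp only [eval_add, mul_add]
    rw [intervalIntegral.integral_add (intervalIntegrable_eval_mul_eval _ V _ _)
      (intervalIntegrable_eval_mul_eval _ W _ _), hV, hW]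
  | smul c V _ hV =>
    simp only [eval_smul, smul_eq_mul, mul_left_comm _ c]
    rw [intervalIntegral.integral_const_mul, hV]

theorem Lop_one_ne_zero (ht : t₀ ≠ t₁) (hK : IsLegendreBasis t₀ t₁ K) : Lop t₀ t₁ r K 1 ≠ 0 := by
  intro h
  have hmass := hK.integral_Lop_mul ht 1 (by simpa using C_mem_degreeLE (1 : ℝ) r)
  simp [h] at hmass


theorem Wsub_le_degreeLE : Wsub t₀ r lam ≤ degreeLE ℝ r := by
  rintro _ ⟨v, ⟨hv, -⟩, rfl⟩
  exact add_mem (mem_degreeLE.2 (degree_derivative_le.trans (mem_degreeLE.1 hv)))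
    (Submodule.smul_mem _ _ hv)

theorem finrank_Wsub : Module.finrank ℝ (Wsub t₀ r lam) = r := by
  set f := derivative + lam • (LinearMap.id : ℝ[X] →ₗ[ℝ] ℝ[X])
  set U := degreeLE ℝ r ⊓ LinearMap.ker (leval t₀)
  have hinj : Function.Injective (f ∘ₗ U.subtype) := by
    rw [← LinearMap.ker_eq_bot, LinearMap.ker_eq_bot']
    rintro ⟨v, hvU⟩ hv
    exact Subtype.ext (eq_zero_of_derivative_add_smul_eq_zero hvU.2 hv)
  calc Module.finrank ℝ (Wsub t₀ r lam) = Module.finrank ℝ (LinearMap.range (f ∘ₗ U.subtype)) := by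
        rw [LinearMap.range_comp, Submodule.range_subtype]; rfl
    _ = r := (LinearMap.finrank_range_of_inj hinj).trans (finrank_degreeLE_inf_ker_leval r t₀)

theorem Wsub_inf_span_Lop_one_eq_bot (ht : t₀ < t₁) (hK : IsLegendreBasis t₀ t₁ K)
    (hlam : 0 ≤ lam) :
    Wsub t₀ r lam ⊓ Submodule.span ℝ {Lop t₀ t₁ r K 1} = ⊥ := by
  rw [Submodule.eq_bot_iff]
  rintro _ ⟨⟨v, ⟨hvr, hv0⟩, rfl⟩, hw⟩
  set T := derivative + lam • (LinearMap.id : ℝ[X] →ₗ[ℝ] ℝ[X])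
  obtain ⟨c, hc⟩ := Submodule.mem_span_singleton.1 hw
  replace hv0 : v.eval t₀ = 0 := hv0
  have htest : ∀ V ∈ degreeLE ℝ r, (∫ t in t₀..t₁, (derivative v).eval t * V.eval t) +
      lam * ∫ t in t₀..t₁, v.eval t * V.eval t = c * V.eval t₀ := by
    intro V hV
    calc _ = ∫ t in t₀..t₁, (T v).eval t * V.eval t := by
          rw [← intervalIntegral.integral_const_mul, ← intervalIntegral.integral_add
            (intervalIntegrable_eval_mul_eval _ _ _ _)
            ((intervalIntegrable_eval_mul_eval _ _ _ _).const_mul _)]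
          simp only [T, LinearMap.add_apply, LinearMap.smul_apply, LinearMap.id_apply, eval_add,
            eval_smul, smul_eq_mul, add_mul, mul_assoc]
      _ = c * V.eval t₀ := by
          simp only [← hc, eval_smul, smul_eq_mul, mul_assoc, intervalIntegral.integral_const_mul,
            hK.integral_Lop_mul ht.ne 1 hV, one_mul]
  have henergy := htest v hvr
  have hmass := htest 1 (by simpa using C_mem_degreeLE (1 : ℝ) r)
  rw [integral_derivative_mul_self, hv0] at henergy
  simp only [eval_one, mul_one, integral_eq_sub_of_hasDerivAt (fun x _ => v.hasDerivAt x)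
    (v.derivative.continuous.intervalIntegrable _ _), hv0] at hmass
  have hnorm : 0 ≤ ∫ t in t₀..t₁, v.eval t * v.eval t :=
    intervalIntegral.integral_nonneg ht.le fun _ _ => mul_self_nonneg _
  have hv1 : v.eval t₁ = 0 := by nlinarith [mul_nonneg hlam hnorm]
  have hlam_norm : lam * ∫ t in t₀..t₁, v.eval t * v.eval t = 0 := by nlinarith
  have hlam_mass : lam * ∫ t in t₀..t₁, v.eval t = 0 := by
    rcases mul_eq_zero.1 hlam_norm with h | h
    · rw [h, zero_mul]
    · simp [eq_zero_of_integral_mul_self_eq_zero ht h]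
  rw [← hc, show c = 0 by linarith, zero_smul]

end

/-- For `λ ≥ 0`, `dim W^r_λ = r` and `P^r = W^r_λ ⊕ span {L(1)}`. -/
theorem stmt_0 (t₀ t₁ : ℝ) (ht : t₀ < t₁) (r : ℕ) (K : ℕ → Polynomial ℝ)
    (hK : IsLegendreBasis t₀ t₁ K) (lam : ℝ) (hlam : 0 ≤ lam) :
    Module.finrank ℝ (Wsub t₀ r lam) = r ∧
    Wsub t₀ r lam ⊓ Submodule.span ℝ {Lop t₀ t₁ r K 1} = ⊥ ∧
    Wsub t₀ r lam ⊔ Submodule.span ℝ {Lop t₀ t₁ r K 1} = Polynomial.degreeLE ℝ r := by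
  have hdisj := Wsub_inf_span_Lop_one_eq_bot ht hK (r := r) hlam
  refine ⟨finrank_Wsub, hdisj, ?_⟩
  have : FiniteDimensional ℝ (Wsub t₀ r lam) := Submodule.finiteDimensional_of_le Wsub_le_degreeLE
  refine Submodule.eq_of_le_of_finrank_eq
    (sup_le Wsub_le_degreeLE (Submodule.span_singleton_le_iff_mem _ _ |>.2 (Lop_mem_degreeLE hK 1)))
    ?_
  have hdim := Submodule.finrank_sup_add_finrank_inf_eq (Wsub t₀ r lam)
    (Submodule.span ℝ {Lop t₀ t₁ r K 1})
  rw [hdisj, finrank_bot, add_zero, finrank_Wsub,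
    finrank_span_singleton (Lop_one_ne_zero ht.ne hK)] at hdim
  rw [hdim, finrank_degreeLE]
end

section
/- Let λ ≥ 0. The linear map Ψ : P^r → P^r defined by Ψ(v) = v' − λ v − L̂(v(t₁)) is a bijection of P^r onto itself; in particular, there exists exactly one φ ∈ P^r satisfying φ' − λ φ − L̂(φ(t₁)) = L(1) (the dG dual solution is well defined). -/
open Polynomial MeasureTheory intervalIntegral

/-!
`Ψ` is a linear endomorphism of the finite-dimensional space `P^r`, so it suffices to show that
its kernel is trivial. If `Ψ v = 0`, testing `v' = λ v + L̂(v(t₁))` against `v` itself gives the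
energy identity `(v(t₁)² - v(t₀)²)/2 = λ ‖v‖² + v(t₁)²`, which for `λ ≥ 0` forces `v(t₁) = 0`.
Then `v' = λ v`, and a polynomial solution of this equation vanishing at a point is zero.
-/

theorem LinearMap.existsUnique_mem_apply_eq_of_mapsTo {𝕜 V : Type*} [DivisionRing 𝕜]
    [AddCommGroup V] [Module 𝕜 V] (f : V →ₗ[𝕜] V) {S : Submodule 𝕜 V} [FiniteDimensional 𝕜 S]
    (hmaps : ∀ v ∈ S, f v ∈ S) (hker : ∀ v ∈ S, f v = 0 → v = 0) {w : V} (hw : w ∈ S) :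
    ∃! v, v ∈ S ∧ f v = w := by
  have hinj : Function.Injective (f.restrict hmaps) := by
    rw [injective_iff_map_eq_zero]
    intro v hv
    exact Subtype.ext (hker v v.2 (congrArg Subtype.val hv))
  obtain ⟨v, hv⟩ := LinearMap.injective_iff_surjective.1 hinj ⟨w, hw⟩
  have hfv : f v = w := congrArg Subtype.val hv
  refine ⟨v, ⟨v.2, hfv⟩, fun u ⟨hu, hfu⟩ => ?_⟩
  have hdiff : f (u - v) = 0 := by rw [map_sub, hfu, hfv, sub_self]
  exact sub_eq_zero.1 (hker _ (S.sub_mem hu v.2) hdiff)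

theorem Polynomial.eq_zero_of_derivative_eq_C_mul {R : Type*} [CommRing R] [IsDomain R]
    [CharZero R] {p : R[X]} {a x : R} (hp : derivative p = C a * p) (hx : p.eval x = 0) :
    p = 0 := by
  have hconst : p.natDegree = 0 := by
    by_contra hd
    rcases eq_or_ne a 0 with rfl | ha
    · exact hd (derivative_eq_zero.1 (by simpa using hp))
    · have hlt := natDegree_derivative_lt hd
      rw [hp, natDegree_C_mul ha] at hlt
      exact lt_irrefl _ hlt
  rw [eq_C_of_natDegree_eq_zero hconst] at hx ⊢
  rw [eval_C] at hx
  rw [hx, map_zero]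

theorem integral_eval_derivative_mul_eval_self (a b : ℝ) (p : ℝ[X]) :
    ∫ t in a..b, (derivative p).eval t * p.eval t = (p.eval b ^ 2 - p.eval a ^ 2) / 2 := by
  have hderiv : ∀ t, HasDerivAt (fun t => p.eval t * p.eval t / 2)
      ((derivative p).eval t * p.eval t) t := fun t =>
    (((p.hasDerivAt t).mul (p.hasDerivAt t)).div_const 2).congr_deriv (by ring)
  rw [integral_eq_sub_of_hasDerivAt (fun t _ => hderiv t)
    (((derivative p).continuous.mul p.continuous).intervalIntegrable a b)]
  ring

theorem natDegree_C_mul_sum_le {R : Type*} [Semiring R] {K : ℕ → R[X]}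
    (hK : ∀ i, (K i).natDegree ≤ i) (a : R) (c : ℕ → R) (r : ℕ) :
    (C a * ∑ i ∈ Finset.range (r + 1), C (c i) * K i).natDegree ≤ r := by
  refine (natDegree_C_mul_le _ _).trans (natDegree_sum_le_of_forall_le _ _ fun i hi => ?_)
  exact (natDegree_C_mul_le _ _).trans ((hK i).trans (Nat.lt_succ_iff.1 (Finset.mem_range.1 hi)))

section Lifting

variable {t₀ t₁ : ℝ} {r : ℕ} {K : ℕ → ℝ[X]}

theorem natDegree_Lop_le (hK : ∀ i, (K i).natDegree = i) (z : ℝ) :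
    (Lop t₀ t₁ r K z).natDegree ≤ r :=
  natDegree_C_mul_sum_le (fun i => (hK i).le) _ _ r

theorem natDegree_LopE_le (hK : ∀ i, (K i).natDegree = i) (z : ℝ) :
    (LopE t₀ t₁ r K z).natDegree ≤ r :=
  natDegree_C_mul_sum_le (fun i => (hK i).le) _ _ r

theorem LopE_eq_smul (z : ℝ) : LopE t₀ t₁ r K z = z • LopE t₀ t₁ r K 1 := by
  rw [LopE, LopE, smul_eq_C_mul, ← mul_assoc, ← C_mul, mul_one_div]

theorem LopE_zero : LopE t₀ t₁ r K 0 = 0 := by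
  rw [LopE_eq_smul, zero_smul]

theorem IsLegendreBasis.span_eq_degreeLE (hK : IsLegendreBasis t₀ t₁ K) (r : ℕ) :
    Submodule.span ℝ (K '' Set.Iic r) = degreeLE ℝ r := by
  have hne : ∀ i, K i ≠ 0 := fun i h => by simpa [h] using hK.2.1 i
  let S : Polynomial.Sequence ℝ :=
    ⟨K, fun i => by rw [degree_eq_natDegree (hne i), hK.1 i]⟩
  exact S.span_degreeLE fun i _ => (leadingCoeff_ne_zero.2 (hne i)).isUnit

theorem integral_LopE_mul_K (ht : t₀ < t₁) (hK : IsLegendreBasis t₀ t₁ K) (z : ℝ) {j : ℕ}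
    (hj : j ≤ r) : ∫ t in t₀..t₁, (LopE t₀ t₁ r K z).eval t * (K j).eval t = z := by
  simp only [LopE, eval_mul, eval_C, eval_finsetSum, Finset.sum_mul, mul_assoc]
  rw [intervalIntegral.integral_const_mul, intervalIntegral.integral_finsetSum
    (f := fun (i : ℕ) (t : ℝ) => (2 * (i : ℝ) + 1) * ((K i).eval t * (K j).eval t)) fun i _ =>
      (continuous_const.mul ((K i).continuous.mul (K j).continuous)).intervalIntegrable _ _]
  simp only [intervalIntegral.integral_const_mul, hK.2.2.2, mul_ite, mul_zero, Finset.sum_ite_eq',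
    Finset.mem_range, Nat.lt_succ_of_le hj, if_true]
  field_simp [(sub_pos.2 ht).ne']

theorem integral_LopE_mul (ht : t₀ < t₁) (hK : IsLegendreBasis t₀ t₁ K) (z : ℝ) {V : ℝ[X]}
    (hV : V.natDegree ≤ r) :
    ∫ t in t₀..t₁, (LopE t₀ t₁ r K z).eval t * V.eval t = z * V.eval t₁ := by
  have hmem : V ∈ Submodule.span ℝ (K '' Set.Iic r) := by
    rw [hK.span_eq_degreeLE, mem_degreeLE, ← natDegree_le_iff_degree_le]
    exact hV
  clear hV
  have hint : ∀ p : ℝ[X], IntervalIntegrable (fun t => (LopE t₀ t₁ r K z).eval t * p.eval t)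
      volume t₀ t₁ := fun p =>
    ((LopE t₀ t₁ r K z).continuous.mul p.continuous).intervalIntegrable _ _
  induction hmem using Submodule.span_induction with
  | mem p hp =>
    obtain ⟨j, hj, rfl⟩ := hp
    rw [integral_LopE_mul_K ht hK z hj, hK.2.1 j, mul_one]
  | zero => simp
  | add p q _ _ hp hq =>
    simp only [eval_add, mul_add]
    rw [integral_add (hint p) (hint q), hp, hq]
  | smul a p _ hp =>
    simp only [eval_smul, smul_eq_mul, mul_left_comm _ a]
    rw [intervalIntegral.integral_const_mul, hp]

theorem eq_zero_of_derivative_sub_C_mul_sub_LopE_eq_zero (ht : t₀ < t₁)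
    (hK : IsLegendreBasis t₀ t₁ K) {lam : ℝ} (hlam : 0 ≤ lam) {v : ℝ[X]} (hv : v.natDegree ≤ r)
    (h : derivative v - C lam * v - LopE t₀ t₁ r K (v.eval t₁) = 0) : v = 0 := by
  have hv' : derivative v = C lam * v + LopE t₀ t₁ r K (v.eval t₁) := by
    rwa [sub_sub, sub_eq_zero] at h
  have henergy : (v.eval t₁ ^ 2 - v.eval t₀ ^ 2) / 2
      = lam * (∫ t in t₀..t₁, v.eval t * v.eval t) + v.eval t₁ ^ 2 := by
    calc (v.eval t₁ ^ 2 - v.eval t₀ ^ 2) / 2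
        = ∫ t in t₀..t₁, (derivative v).eval t * v.eval t :=
          (integral_eval_derivative_mul_eval_self _ _ v).symm
      _ = ∫ t in t₀..t₁, (lam * (v.eval t * v.eval t)
            + (LopE t₀ t₁ r K (v.eval t₁)).eval t * v.eval t) :=
          integral_congr fun t _ => by rw [hv', eval_add, eval_mul, eval_C]; ring
      _ = lam * (∫ t in t₀..t₁, v.eval t * v.eval t) + v.eval t₁ ^ 2 := by
          rw [integral_add (f := fun t => lam * (v.eval t * v.eval t))
            (g := fun t => (LopE t₀ t₁ r K (v.eval t₁)).eval t * v.eval t)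
            ((continuous_const.mul (v.continuous.mul v.continuous)).intervalIntegrable _ _)
            (((LopE t₀ t₁ r K (v.eval t₁)).continuous.mul v.continuous).intervalIntegrable _ _),
            intervalIntegral.integral_const_mul, integral_LopE_mul ht hK _ hv, sq]
  have hnorm : 0 ≤ lam * ∫ t in t₀..t₁, v.eval t * v.eval t :=
    mul_nonneg hlam (integral_nonneg ht.le fun t _ => mul_self_nonneg _)
  have ht₁ : v.eval t₁ = 0 :=
    pow_eq_zero_iff two_ne_zero |>.1 (by nlinarith [sq_nonneg (v.eval t₀), sq_nonneg (v.eval t₁)])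
  refine eq_zero_of_derivative_eq_C_mul (a := lam) ?_ ht₁
  rw [hv', ht₁, LopE_zero, add_zero]

end Lifting

/-- The paper's `Ψ`, as a linear map on all of `ℝ[X]`. -/
noncomputable def dualOp (t₀ t₁ : ℝ) (r : ℕ) (K : ℕ → ℝ[X]) (lam : ℝ) : ℝ[X] →ₗ[ℝ] ℝ[X] :=
  derivative - lam • LinearMap.id - (leval t₁).smulRight (LopE t₀ t₁ r K 1)

theorem dualOp_apply (t₀ t₁ : ℝ) (r : ℕ) (K : ℕ → ℝ[X]) (lam : ℝ) (v : ℝ[X]) :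
    dualOp t₀ t₁ r K lam v = derivative v - C lam * v - LopE t₀ t₁ r K (v.eval t₁) := by
  rw [dualOp, LinearMap.sub_apply, LinearMap.sub_apply, LinearMap.smul_apply,
    LinearMap.id_apply, LinearMap.smulRight_apply, leval_apply, ← LopE_eq_smul, smul_eq_C_mul]

theorem natDegree_dualOp_le {t₀ t₁ : ℝ} {r : ℕ} {K : ℕ → ℝ[X]} (hK : ∀ i, (K i).natDegree = i)
    (lam : ℝ) {v : ℝ[X]} (hv : v.natDegree ≤ r) : (dualOp t₀ t₁ r K lam v).natDegree ≤ r := by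
  rw [dualOp_apply]
  refine (natDegree_sub_le _ _).trans (max_le ((natDegree_sub_le _ _).trans (max_le ?_ ?_))
    (natDegree_LopE_le hK _))
  · exact (natDegree_derivative_le v).trans (by omega)
  · exact (natDegree_C_mul_le _ _).trans hv

/-- For `λ ≥ 0`, the map `Ψ(v) = v' - λ v - L̂(v(t₁))` is a bijection of `P^r` onto itself;
in particular there is exactly one `φ ∈ P^r` with `Ψ(φ) = L(1)` (the dG dual solution). -/
theorem stmt_1 (t₀ t₁ : ℝ) (ht : t₀ < t₁) (r : ℕ) (K : ℕ → Polynomial ℝ)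
    (hK : IsLegendreBasis t₀ t₁ K) (lam : ℝ) (hlam : 0 ≤ lam) :
    (∀ w : Polynomial ℝ, w.natDegree ≤ r → ∃! v : Polynomial ℝ, v.natDegree ≤ r ∧
      Polynomial.derivative v - Polynomial.C lam * v - LopE t₀ t₁ r K (v.eval t₁) = w) ∧
    (∃! φ : Polynomial ℝ, φ.natDegree ≤ r ∧
      Polynomial.derivative φ - Polynomial.C lam * φ - LopE t₀ t₁ r K (φ.eval t₁)
        = Lop t₀ t₁ r K 1) := by
  have hmem : ∀ p : ℝ[X], p ∈ degreeLE ℝ r ↔ p.natDegree ≤ r := fun p => by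
    rw [mem_degreeLE, natDegree_le_iff_degree_le]
  have : FiniteDimensional ℝ (degreeLE ℝ r) := degreeLT_succ_eq_degreeLE (R := ℝ) ▸ inferInstance
  have hsolve : ∀ w : ℝ[X], w.natDegree ≤ r → ∃! v : ℝ[X], v.natDegree ≤ r ∧
      derivative v - C lam * v - LopE t₀ t₁ r K (v.eval t₁) = w := fun w hw => by
    simpa only [hmem, dualOp_apply] using (dualOp t₀ t₁ r K lam).existsUnique_mem_apply_eq_of_mapsTo
      (fun v hv => (hmem _).2 (natDegree_dualOp_le hK.1 lam ((hmem v).1 hv)))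
      (fun v hv h => eq_zero_of_derivative_sub_C_mul_sub_LopE_eq_zero ht hK hlam ((hmem v).1 hv)
        (by rwa [← dualOp_apply]))
      ((hmem w).2 hw)
  exact ⟨hsolve, hsolve _ (natDegree_Lop_le hK.1 1)⟩
end

section
/- Let λ ≥ 0 and let φ ∈ P^r satisfy φ' − λ φ − L̂(φ(t₁)) = L(1) on I. Then φ is L²(I)-orthogonal to W^r_λ, i.e. ∫_I φ(t)(v'(t) + λ v(t)) dt = 0 for every v ∈ P^r_0. -/
open Polynomial MeasureTheory intervalIntegral

/-!
Integrating by parts, `∫ φ v' = φ(t₁) v(t₁) - φ(t₀) v(t₀) - ∫ φ' v`. Pairing the equation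
`φ' = λ φ + L̂(φ(t₁)) + L(1)` with `v ∈ P^r` and using the defining properties of the two liftings,
`∫ φ' v = λ ∫ φ v + φ(t₁) v(t₁) + v(t₀)`. When `v(t₀) = 0` the boundary terms cancel and what is
left is `∫ φ (v' + λ v) = 0`. The lifting properties themselves only need to be checked on the
Legendre basis, where they follow from orthogonality and the endpoint values `K_i(t₀) = (-1)^i`,
`K_i(t₁) = 1`.
-/

lemma Polynomial.intervalIntegrable_eval_mul_eval_s2 (p q : ℝ[X]) (a b : ℝ) :
    IntervalIntegrable (fun t => p.eval t * q.eval t) volume a b :=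
  (p.continuous.mul q.continuous).intervalIntegrable a b

noncomputable def l2Pairing (a b : ℝ) : ℝ[X] →ₗ[ℝ] ℝ[X] →ₗ[ℝ] ℝ :=
  LinearMap.mk₂ ℝ (fun p q => ∫ t in a..b, p.eval t * q.eval t)
    (fun p₁ p₂ q => by
      simp only [eval_add, add_mul]
      exact integral_add (intervalIntegrable_eval_mul_eval_s2 _ _ a b)
        (intervalIntegrable_eval_mul_eval_s2 _ _ a b))
    (fun c p q => by
      simp only [eval_smul, smul_eq_mul, mul_assoc]
      exact integral_const_mul c _)
    (fun p q₁ q₂ => by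
      simp only [eval_add, mul_add]
      exact integral_add (intervalIntegrable_eval_mul_eval_s2 _ _ a b)
        (intervalIntegrable_eval_mul_eval_s2 _ _ a b))
    (fun c p q => by
      simp only [eval_smul, smul_eq_mul, mul_left_comm _ c]
      exact integral_const_mul c _)

lemma l2Pairing_apply (a b : ℝ) (p q : ℝ[X]) :
    l2Pairing a b p q = ∫ t in a..b, p.eval t * q.eval t := rfl

lemma l2Pairing_C_mul (a b s : ℝ) (p q : ℝ[X]) :
    l2Pairing a b (C s * p) q = s * l2Pairing a b p q := by
  rw [C_mul', map_smul, LinearMap.smul_apply, smul_eq_mul]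

lemma l2Pairing_derivative_right (a b : ℝ) (p q : ℝ[X]) :
    l2Pairing a b p (derivative q) =
      p.eval b * q.eval b - p.eval a * q.eval a - l2Pairing a b (derivative p) q :=
  integral_mul_deriv_eq_deriv_mul (fun x _ => p.hasDerivAt x) (fun x _ => q.hasDerivAt x)
    ((derivative p).continuous.intervalIntegrable a b)
    ((derivative q).continuous.intervalIntegrable a b)

namespace IsLegendreBasis

variable {t₀ t₁ : ℝ} {K : ℕ → ℝ[X]}

lemma ne_zero_s2 (hK : IsLegendreBasis t₀ t₁ K) (i : ℕ) : K i ≠ 0 := by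
  intro h
  simpa [h] using hK.2.1 i

noncomputable def toSequence (hK : IsLegendreBasis t₀ t₁ K) : Polynomial.Sequence ℝ where
  elems' := K
  degree_eq' i := by rw [degree_eq_natDegree (hK.ne_zero_s2 i), hK.1 i]

lemma span_image_Iic_s2 (hK : IsLegendreBasis t₀ t₁ K) (r : ℕ) :
    Submodule.span ℝ (K '' Set.Iic r) = degreeLE ℝ r :=
  hK.toSequence.span_degreeLE fun i _ => (leadingCoeff_ne_zero.mpr (hK.ne_zero_s2 i)).isUnit

lemma linearMap_eq_of_natDegree_le (hK : IsLegendreBasis t₀ t₁ K) {M : Type*}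
    [AddCommMonoid M] [Module ℝ M] {r : ℕ} {f g : ℝ[X] →ₗ[ℝ] M}
    (h : ∀ j ≤ r, f (K j) = g (K j)) {V : ℝ[X]} (hV : V.natDegree ≤ r) : f V = g V := by
  have hVmem : V ∈ Submodule.span ℝ (K '' Set.Iic r) := by
    rw [hK.span_image_Iic_s2, mem_degreeLE]
    exact degree_le_of_natDegree_le hV
  refine LinearMap.eqOn_span' ?_ hVmem
  rintro _ ⟨j, hj, rfl⟩
  exact h j hj

lemma l2Pairing_sum_C_mul (hK : IsLegendreBasis t₀ t₁ K) (r : ℕ) (c : ℕ → ℝ) {j : ℕ}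
    (hj : j ≤ r) :
    l2Pairing t₀ t₁ (∑ i ∈ Finset.range (r + 1), C (c i) * K i) (K j) =
      c j * ((t₁ - t₀) / (2 * (j : ℝ) + 1)) := by
  rw [map_sum, LinearMap.sum_apply]
  simp only [l2Pairing_C_mul]
  simp only [l2Pairing_apply, hK.2.2.2, mul_ite, mul_zero, Finset.sum_ite_eq', Finset.mem_range,
    if_pos (Nat.lt_succ_of_le hj)]

lemma l2Pairing_Lop (hK : IsLegendreBasis t₀ t₁ K) (hk : t₀ ≠ t₁) {r : ℕ} (z : ℝ) {V : ℝ[X]}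
    (hV : V.natDegree ≤ r) : l2Pairing t₀ t₁ (Lop t₀ t₁ r K z) V = z * V.eval t₀ := by
  refine hK.linearMap_eq_of_natDegree_le (g := z • leval t₀) (fun j hj => ?_) hV
  have : t₁ - t₀ ≠ 0 := sub_ne_zero.mpr hk.symm
  rw [Lop, l2Pairing_C_mul, hK.l2Pairing_sum_C_mul r _ hj, LinearMap.smul_apply, leval_apply,
    hK.2.2.1 j, smul_eq_mul]
  field_simp

lemma l2Pairing_LopE (hK : IsLegendreBasis t₀ t₁ K) (hk : t₀ ≠ t₁) {r : ℕ} (z : ℝ) {V : ℝ[X]}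
    (hV : V.natDegree ≤ r) : l2Pairing t₀ t₁ (LopE t₀ t₁ r K z) V = z * V.eval t₁ := by
  refine hK.linearMap_eq_of_natDegree_le (g := z • leval t₁) (fun j hj => ?_) hV
  have : t₁ - t₀ ≠ 0 := sub_ne_zero.mpr hk.symm
  rw [LopE, l2Pairing_C_mul, hK.l2Pairing_sum_C_mul r _ hj, LinearMap.smul_apply, leval_apply,
    hK.2.1 j, smul_eq_mul]
  field_simp

end IsLegendreBasis

theorem stmt_2_general (t₀ t₁ : ℝ) (ht : t₀ < t₁) (r : ℕ) (K : ℕ → Polynomial ℝ)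
    (hK : IsLegendreBasis t₀ t₁ K) (lam : ℝ)
    (φ : Polynomial ℝ)
    (hφ : Polynomial.derivative φ - Polynomial.C lam * φ - LopE t₀ t₁ r K (φ.eval t₁)
      = Lop t₀ t₁ r K 1) :
    ∀ v : Polynomial ℝ, v.natDegree ≤ r → v.eval t₀ = 0 →
      (∫ t in t₀..t₁, φ.eval t * ((Polynomial.derivative v).eval t + lam * v.eval t)) = 0 := by
  intro v hv hv₀
  have hφ' : derivative φ = Lop t₀ t₁ r K 1 + LopE t₀ t₁ r K (φ.eval t₁) + C lam * φ := by
    linear_combination hφ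
  have hφ'v : l2Pairing t₀ t₁ (derivative φ) v =
      φ.eval t₁ * v.eval t₁ + lam * l2Pairing t₀ t₁ φ v := by
    rw [hφ', map_add, map_add, LinearMap.add_apply, LinearMap.add_apply, l2Pairing_C_mul,
      hK.l2Pairing_Lop ht.ne 1 hv, hK.l2Pairing_LopE ht.ne _ hv, hv₀]
    ring
  calc (∫ t in t₀..t₁, φ.eval t * ((derivative v).eval t + lam * v.eval t))
      = l2Pairing t₀ t₁ φ (derivative v) + lam * l2Pairing t₀ t₁ φ v := by
        rw [← smul_eq_mul lam, ← LinearMap.map_smul, ← map_add, l2Pairing_apply]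
        simp only [eval_add, eval_smul, smul_eq_mul]
    _ = 0 := by
        rw [l2Pairing_derivative_right, hφ'v, hv₀]
        ring

/-- The dG dual solution `φ` is `L²(I)`-orthogonal to `W^r_λ = {v' + λ v : v ∈ P^r_0}`. -/
theorem stmt_2 (t₀ t₁ : ℝ) (ht : t₀ < t₁) (r : ℕ) (K : ℕ → Polynomial ℝ)
    (hK : IsLegendreBasis t₀ t₁ K) (lam : ℝ) (hlam : 0 ≤ lam)
    (φ : Polynomial ℝ) (hφdeg : φ.natDegree ≤ r)
    (hφ : Polynomial.derivative φ - Polynomial.C lam * φ - LopE t₀ t₁ r K (φ.eval t₁)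
      = Lop t₀ t₁ r K 1) :
    ∀ v : Polynomial ℝ, v.natDegree ≤ r → v.eval t₀ = 0 →
      (∫ t in t₀..t₁, φ.eval t * ((Polynomial.derivative v).eval t + lam * v.eval t)) = 0 :=
  stmt_2_general t₀ t₁ ht r K hK lam φ hφ
end
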